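/- Let c > 0 and let d > c be a real number satisfying 1 + d·(ln c − ln d + 1) − c = 0. Then d > c + √c. -/
import Mathlib

/-- **Remark 2.** If `c > 0` and `d > c` satisfies `1 + d(ln c - ln d + 1) - c = 0`
(i.e. `d = d_c` from the balls and bins maximum-load asymptotics), then
`d > c + √c`. -/
theorem dc_gt_c_add_sqrt_c (c d : ℝ) (hc : 0 < c) (hcd : c < d)
    (heq : 1 + d * (Real.log c - Real.log d + 1) - c = 0) :
    c + Real.sqrt c < d := by
  have hd : 0 < d := hc.trans hcd
  have hx : 0 < d / c := div_pos hd hc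
  have hx1 : d / c ≠ 1 := by
    intro h
    have : d = c := by field_simp at h; linarith
    linarith
  have hlog : Real.log (d / c) < d / c - 1 := Real.log_lt_sub_one_of_pos hx hx1
  rw [Real.log_div (ne_of_gt hd) (ne_of_gt hc)] at hlog
  -- so log c - log d > 1 - d/c
  have key : c - 1 > d * (2 - d / c) := by
    have h1 : Real.log c - Real.log d + 1 > 2 - d / c := by linarith
    nlinarith [mul_lt_mul_of_pos_left h1 hd]
  have hsq : c < (d - c) ^ 2 := by
    have h2 := mul_lt_mul_of_pos_left key hc
    have h3 : c * (d * (2 - d / c)) = 2 * c * d - d * d := by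
      field_simp
    nlinarith
  have hpos : 0 < d - c := by linarith
  have : Real.sqrt c < d - c := (Real.sqrt_lt' hpos).2 hsq
  linarith
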